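/- arXiv:1804.09697 — 10 statements merged into one kernel-verified Lean document; each statement's English description precedes it below -/
import Mathlib

section
/- Let p, q be real polynomials with deg p ≤ 2 and deg q ≤ 1, let n ≥ 1 and let x_1, …, x_n be pairwise distinct real numbers. Then the electrostatic equilibrium equations p(x_i)·∑_{k≠i} 2/(x_i − x_k) = q(x_i) − p'(x_i) hold for all 1 ≤ i ≤ n if and only if there exists λ ∈ ℝ such that the polynomial y(x) = ∏_{k=1}^n (x − x_k) satisfies the differential equation −(p(x)·y'(x))' + q(x)·y'(x) = λ·y(x) identically. -/
open Polynomial Finset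

private lemma deriv_fin_prod {ι : Type*} [DecidableEq ι] (s : Finset ι) (f : ι → Polynomial ℝ) :
    Polynomial.derivative (∏ i ∈ s, f i)
      = ∑ i ∈ s, (∏ j ∈ s.erase i, f j) * Polynomial.derivative (f i) := by
  induction s using Finset.induction_on with
  | empty => simp
  | @insert a s ha ih =>
    rw [Finset.prod_insert ha, Polynomial.derivative_mul, ih, Finset.sum_insert ha,
      Finset.erase_insert ha, Finset.mul_sum]
    have hterm : ∀ i ∈ s, (∏ j ∈ (insert a s).erase i, f j) * Polynomial.derivative (f i)
        = f a * ((∏ j ∈ s.erase i, f j) * Polynomial.derivative (f i)) := by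
      intro i hi
      rw [Finset.erase_insert_of_ne (fun h : a = i => ha (h ▸ hi)),
        Finset.prod_insert (fun h => ha (Finset.mem_of_mem_erase h))]
      ring
    rw [Finset.sum_congr rfl hterm, mul_comm (∏ i ∈ s, f i) (Polynomial.derivative (f a))]

theorem stmt_0 (p q : Polynomial ℝ) (hp : p.natDegree ≤ 2) (hq : q.natDegree ≤ 1)
    (n : ℕ) (hn : 1 ≤ n) (x : Fin n → ℝ) (hx : Function.Injective x) :
    (∀ i : Fin n, p.eval (x i) * ∑ k ∈ univ.erase i, 2 / (x i - x k)
        = q.eval (x i) - p.derivative.eval (x i)) ↔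
    (∃ lam : ℝ,
      -(p * (∏ k, (X - C (x k))).derivative).derivative
        + q * (∏ k, (X - C (x k))).derivative
        = C lam * ∏ k, (X - C (x k))) := by
  set y : Polynomial ℝ := ∏ k, (X - C (x k)) with hy
  have hymonic : y.Monic := monic_prod_of_monic _ _ fun k _ => monic_X_sub_C _
  have hydeg : y.natDegree = n := by
    rw [hy, natDegree_prod _ _ fun k _ => X_sub_C_ne_zero _]
    simp
  have hyroot : ∀ i, y.eval (x i) = 0 := by
    intro i; rw [hy, eval_prod]
    exact Finset.prod_eq_zero (mem_univ i) (by simp)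
  have hd : derivative y = ∑ j, ∏ k ∈ univ.erase j, (X - C (x k)) := by
    rw [hy, deriv_fin_prod]
    simp
  have hy'eval : ∀ i, (derivative y).eval (x i) = ∏ k ∈ univ.erase i, (x i - x k) := by
    intro i
    rw [hd]
    simp only [eval_finset_sum, eval_prod, eval_sub, eval_X, eval_C]
    rw [Finset.sum_eq_single i]
    · intro j _ hji
      exact Finset.prod_eq_zero (Finset.mem_erase.mpr ⟨Ne.symm hji, mem_univ i⟩) (by simp)
    · simp
  have hy'ne : ∀ i, (derivative y).eval (x i) ≠ 0 := by
    intro i; rw [hy'eval]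
    exact Finset.prod_ne_zero_iff.mpr fun k hk =>
      sub_ne_zero.mpr fun h => (Finset.mem_erase.mp hk).1 (hx h).symm
  have hy'' : ∀ i, (derivative (derivative y)).eval (x i)
      = 2 * ∑ l ∈ univ.erase i, ∏ k ∈ (univ.erase i).erase l, (x i - x k) := by
    intro i
    rw [hd, derivative_sum]
    simp only [deriv_fin_prod, derivative_sub, derivative_X, derivative_C, sub_zero, mul_one,
      eval_finset_sum, eval_prod, eval_sub, eval_X, eval_C]
    rw [← Finset.sum_erase_add _ _ (mem_univ i)]
    have hrest : ∑ j ∈ univ.erase i, ∑ l ∈ univ.erase j, ∏ k ∈ (univ.erase j).erase l, (x i - x k)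
        = ∑ j ∈ univ.erase i, ∏ k ∈ (univ.erase i).erase j, (x i - x k) := by
      refine Finset.sum_congr rfl fun j hj => ?_
      have hji : j ≠ i := (Finset.mem_erase.mp hj).1
      rw [Finset.sum_eq_single i]
      · rw [Finset.erase_right_comm]
      · intro l hl hli
        refine Finset.prod_eq_zero (Finset.mem_erase.mpr ⟨Ne.symm hli,
          Finset.mem_erase.mpr ⟨Ne.symm hji, mem_univ i⟩⟩) (by simp)
      · intro hni
        exact absurd (Finset.mem_erase.mpr ⟨Ne.symm hji, mem_univ i⟩) hni
    rw [hrest]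
    ring
  have hSrel : ∀ i, (∑ k ∈ univ.erase i, 2 / (x i - x k)) * (∏ k ∈ univ.erase i, (x i - x k))
      = 2 * ∑ l ∈ univ.erase i, ∏ k ∈ (univ.erase i).erase l, (x i - x k) := by
    intro i
    rw [Finset.sum_mul, Finset.mul_sum]
    refine Finset.sum_congr rfl fun l hl => ?_
    rw [← Finset.mul_prod_erase _ _ hl]
    have hne : x i - x l ≠ 0 := sub_ne_zero.mpr fun h => (Finset.mem_erase.mp hl).1 (hx h).symm
    field_simp
  have key : ∀ i, (p.eval (x i) * ∑ k ∈ univ.erase i, 2 / (x i - x k)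
        = q.eval (x i) - p.derivative.eval (x i)) ↔
      (-(p * derivative y).derivative + q * derivative y).eval (x i) = 0 := by
    intro i
    have hy2 : (derivative (derivative y)).eval (x i)
        = (∑ k ∈ univ.erase i, 2 / (x i - x k)) * (derivative y).eval (x i) := by
      rw [hy'', hy'eval, ← hSrel]
    rw [derivative_mul]
    simp only [eval_add, eval_neg, eval_mul, hy2]
    set a := p.eval (x i)
    set b := p.derivative.eval (x i)
    set c := q.eval (x i)
    set d := (derivative y).eval (x i)
    set S := ∑ k ∈ univ.erase i, 2 / (x i - x k)
    have hd0 : d ≠ 0 := hy'ne i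
    constructor
    · intro h
      linear_combination (-d) * h
    · intro h
      have h2 : (a * S - (c - b)) * d = 0 := by linear_combination -h
      rcases mul_eq_zero.mp h2 with h3 | h3
      · linarith
      · exact absurd h3 hd0
  constructor
  · intro h
    set F := -(p * derivative y).derivative + q * derivative y with hF
    have hFroot : ∀ i, F.eval (x i) = 0 := fun i => (key i).mp (h i)
    have hdvd : y ∣ F := by
      rw [hy]
      refine Finset.prod_dvd_of_coprime ?_ fun i _ => dvd_iff_isRoot.mpr (hFroot i)
      exact (pairwise_coprime_X_sub_C hx).set_pairwise _
    obtain ⟨g, hg⟩ := hdvd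
    have hyd' : (derivative y).natDegree ≤ n - 1 := by
      have := natDegree_derivative_le y
      omega
    have h1 : (derivative (p * derivative y)).natDegree ≤ n := by
      have h2 := natDegree_derivative_le (p * derivative y)
      have h3 := natDegree_mul_le (p := p) (q := derivative y)
      omega
    have h2 : (q * derivative y).natDegree ≤ n := by
      have h3 := natDegree_mul_le (p := q) (q := derivative y)
      omega
    have hdegF : F.natDegree ≤ n := by
      refine le_trans (natDegree_add_le _ _) ?_
      rw [natDegree_neg]
      omega
    by_cases hg0 : g = 0
    · exact ⟨0, by rw [hg, hg0, mul_zero, map_zero, zero_mul]⟩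
    · have hgdeg : g.natDegree = 0 := by
        have hmul := natDegree_mul hymonic.ne_zero hg0
        rw [← hg, hydeg] at hmul
        omega
      have hc : g = C (g.coeff 0) := eq_C_coeff_zero_iff_natDegree_eq_zero.mpr hgdeg
      refine ⟨g.coeff 0, ?_⟩
      rw [hg]
      conv_lhs => rw [hc]
      ring
  · rintro ⟨lam, hlam⟩ i
    apply (key i).mpr
    rw [hlam, eval_mul, eval_C, hyroot i, mul_zero]
end

section
/- Let p, q be real polynomials with deg p ≤ 2 and deg q ≤ 1, let n ≥ 1, let x_1, …, x_n be pairwise distinct real numbers and λ ∈ ℝ. If the polynomial y(x) = ∏_{k=1}^n (x − x_k) satisfies −(p(x)·y'(x))' + q(x)·y'(x) = λ·y(x) identically, then for every 1 ≤ i ≤ n one has p(x_i)·∑_{k≠i} 2/(x_i − x_k) = q(x_i) − p'(x_i). -/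
open Polynomial Finset

theorem my_derivative_prod {ι : Type*} [DecidableEq ι] (s : Finset ι) (f : ι → ℝ[X]) :
    derivative (∏ k ∈ s, f k) = ∑ j ∈ s, (∏ k ∈ s.erase j, f k) * derivative (f j) := by
  rw [Finset.prod_eq_multiset_prod, derivative_prod]
  rw [Finset.sum]
  congr 1

theorem stmt_1 (p q : Polynomial ℝ) (hp : p.natDegree ≤ 2) (hq : q.natDegree ≤ 1)
    (n : ℕ) (hn : 1 ≤ n) (x : Fin n → ℝ) (hx : Function.Injective x) (lam : ℝ)
    (heq : -(p * (∏ k, (X - C (x k))).derivative).derivative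
        + q * (∏ k, (X - C (x k))).derivative
        = C lam * ∏ k, (X - C (x k))) :
    ∀ i : Fin n, p.eval (x i) * ∑ k ∈ univ.erase i, 2 / (x i - x k)
        = q.eval (x i) - p.derivative.eval (x i) := by
  intro i
  set y : Polynomial ℝ := ∏ k, (X - C (x k)) with hy
  have key : ∀ (t : Finset (Fin n)), eval (x i) (∏ k ∈ t, (X - C (x k)))
      = ∏ k ∈ t, (x i - x k) := by
    intro t; simp [eval_prod]
  have hne : ∀ k : Fin n, k ≠ i → x i - x k ≠ 0 := by
    intro k hk
    exact sub_ne_zero.mpr (fun h => hk (hx h.symm))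
  -- first derivative
  have hd1 : derivative y = ∑ j, ∏ k ∈ univ.erase j, (X - C (x k)) := by
    rw [hy, my_derivative_prod]
    simp
  set D : ℝ := ∏ k ∈ univ.erase i, (x i - x k) with hDdef
  have hDne : D ≠ 0 := by
    apply Finset.prod_ne_zero_iff.mpr
    intro k hk
    exact hne k (Finset.ne_of_mem_erase hk)
  have hD : eval (x i) (derivative y) = D := by
    rw [hd1, eval_finset_sum]
    rw [Finset.sum_eq_single i]
    · exact key _
    · intro j _ hj
      rw [key]
      refine Finset.prod_eq_zero (Finset.mem_erase.mpr ⟨hj.symm, Finset.mem_univ i⟩) ?_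
      simp
    · simp
  set T : ℝ := ∑ j ∈ univ.erase i, ∏ k ∈ (univ.erase i).erase j, (x i - x k) with hTdef
  have hd2 : eval (x i) (derivative (derivative y)) = 2 * T := by
    rw [hd1, derivative_sum]
    simp only [my_derivative_prod, derivative_sub, derivative_X, derivative_C, sub_zero, mul_one]
    rw [eval_finset_sum]
    have hterm : ∀ j : Fin n, eval (x i) (∑ l ∈ (univ.erase j),
        ∏ k ∈ ((univ : Finset (Fin n)).erase j).erase l, (X - C (x k)))
        = ∑ l ∈ (univ.erase j), ∏ k ∈ ((univ : Finset (Fin n)).erase j).erase l, (x i - x k) := by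
      intro j
      rw [eval_finset_sum]
      exact Finset.sum_congr rfl (fun l _ => key _)
    rw [Finset.sum_congr rfl (fun j _ => hterm j)]
    rw [← Finset.add_sum_erase univ _ (Finset.mem_univ i)]
    have h2 : ∑ j ∈ univ.erase i, ∑ l ∈ (univ.erase j),
        ∏ k ∈ ((univ : Finset (Fin n)).erase j).erase l, (x i - x k) = T := by
      rw [hTdef]
      refine Finset.sum_congr rfl (fun j hj => ?_)
      have hji : j ≠ i := Finset.ne_of_mem_erase hj
      rw [Finset.sum_eq_single i]
      · congr 1
        ext k
        simp only [Finset.mem_erase, Finset.mem_univ, and_true]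
        tauto
      · intro l hl hli
        refine Finset.prod_eq_zero (Finset.mem_erase.mpr ⟨hli.symm,
          Finset.mem_erase.mpr ⟨hji.symm, Finset.mem_univ i⟩⟩) ?_
        simp
      · intro h
        exact absurd (Finset.mem_erase.mpr ⟨hji.symm, Finset.mem_univ i⟩) h
    rw [h2, hTdef]
    ring
  -- eval y at x i is 0
  have hy0 : eval (x i) y = 0 := by
    rw [hy, key]
    exact Finset.prod_eq_zero (Finset.mem_univ i) (by simp)
  -- evaluate the equation
  have hE := congrArg (eval (x i)) heq
  rw [derivative_mul] at hE
  simp only [eval_add, eval_neg, eval_mul, eval_C, hy0, mul_zero, hD, hd2] at hE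
  -- sum identity: S * D = 2 * T
  have hS : (∑ k ∈ univ.erase i, 2 / (x i - x k)) * D = 2 * T := by
    rw [Finset.sum_mul, hTdef, Finset.mul_sum]
    refine Finset.sum_congr rfl (fun l hl => ?_)
    have hli : l ≠ i := Finset.ne_of_mem_erase hl
    have hDsplit : D = (x i - x l) * ∏ k ∈ (univ.erase i).erase l, (x i - x k) := by
      rw [hDdef, ← Finset.mul_prod_erase _ _ hl]
    rw [hDsplit]
    field_simp [hne l hli]
  apply mul_right_cancel₀ hDne
  calc p.eval (x i) * (∑ k ∈ univ.erase i, 2 / (x i - x k)) * D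
      = p.eval (x i) * (2 * T) := by rw [mul_assoc, hS]
    _ = (q.eval (x i) - p.derivative.eval (x i)) * D := by linarith [hE]
end

section
/- Let p, q be real polynomials with deg p ≤ 2 and deg q ≤ 1, let n ≥ 1, let x_1, …, x_n be pairwise distinct real numbers and let f(x) = ∏_{k=1}^n (x − x_k). Then for every 1 ≤ i ≤ n, the polynomial g = (p·f')' − q·f' satisfies g(x_i) = f'(x_i) · ( p(x_i)·∑_{k≠i} 2/(x_i − x_k) + p'(x_i) − q(x_i) ). In particular, g(x_i) = 0 if and only if p(x_i)·∑_{k≠i} 2/(x_i − x_k) = q(x_i) − p'(x_i). -/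
open Polynomial Finset

theorem stmt_7 (p q : Polynomial ℝ) (hp : p.natDegree ≤ 2) (hq : q.natDegree ≤ 1)
    (n : ℕ) (hn : 1 ≤ n) (x : Fin n → ℝ) (hx : Function.Injective x) :
    ∀ i : Fin n,
      (derivative (p * derivative (∏ k, (X - C (x k))))
          - q * derivative (∏ k, (X - C (x k)))).eval (x i)
        = (derivative (∏ k, (X - C (x k)))).eval (x i)
            * (p.eval (x i) * ∑ k ∈ univ.erase i, 2 / (x i - x k)
                + p.derivative.eval (x i) - q.eval (x i))
      ∧ ((derivative (p * derivative (∏ k, (X - C (x k))))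
          - q * derivative (∏ k, (X - C (x k)))).eval (x i) = 0
        ↔ p.eval (x i) * ∑ k ∈ univ.erase i, 2 / (x i - x k)
            = q.eval (x i) - p.derivative.eval (x i)) := by
  intro i
  -- notations
  set f : Polynomial ℝ := ∏ k, (X - C (x k)) with hf
  have hder : ∀ (s : Finset (Fin n)),
      derivative (∏ j ∈ s, (X - C (x j))) = ∑ m ∈ s, ∏ j ∈ s.erase m, (X - C (x j)) := by
    intro s
    induction s using Finset.induction_on with
    | empty => simp
    | @insert a s ha ih =>
      rw [Finset.prod_insert ha, derivative_mul, ih, Finset.sum_insert ha,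
        Finset.erase_insert ha]
      simp only [derivative_sub, derivative_X, derivative_C, sub_zero, one_mul]
      rw [Finset.mul_sum]
      congr 1
      apply Finset.sum_congr rfl
      intro m hm
      rw [Finset.erase_insert_of_ne (fun h : a = m => ha (h ▸ hm)),
        Finset.prod_insert (fun h => ha (Finset.erase_subset _ _ h))]
  have hne : ∀ k ∈ univ.erase i, x i - x k ≠ 0 := by
    intro k hk
    have : k ≠ i := (Finset.mem_erase.mp hk).1
    exact sub_ne_zero.mpr fun h => this (hx h.symm)
  -- A := f'(x i)
  set A : ℝ := ∏ j ∈ univ.erase i, (x i - x j) with hA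
  have hAne : A ≠ 0 := Finset.prod_ne_zero_iff.mpr hne
  have hevalA : (derivative f).eval (x i) = A := by
    rw [hf, hder, eval_finset_sum]
    rw [Finset.sum_eq_single i]
    · simp [hA, eval_prod]
    · intro m _ hmi
      have : i ∈ (univ : Finset (Fin n)).erase m := Finset.mem_erase.mpr ⟨fun h => hmi h.symm, Finset.mem_univ i⟩
      simp only [eval_prod, eval_sub, eval_X, eval_C]
      exact Finset.prod_eq_zero this (by ring)
    · simp
  -- T k := ∏_{j ≠ i, k}
  have hAT : ∀ k ∈ univ.erase i,
      A = (x i - x k) * ∏ j ∈ (univ.erase i).erase k, (x i - x j) := by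
    intro k hk
    rw [hA, ← Finset.mul_prod_erase _ _ hk]
  -- f''(x i)
  have hevalB : (derivative (derivative f)).eval (x i)
      = 2 * ∑ k ∈ univ.erase i, ∏ j ∈ (univ.erase i).erase k, (x i - x j) := by
    rw [hf, hder, derivative_sum]
    have : ∀ m : Fin n,
        derivative (∏ j ∈ univ.erase m, (X - C (x j)))
          = ∑ k ∈ univ.erase m, ∏ j ∈ (univ.erase m).erase k, (X - C (x j)) :=
      fun m => hder _
    simp only [this, eval_finset_sum, eval_prod, eval_sub, eval_X, eval_C]
    rw [Finset.sum_eq_add_sum_sdiff_singleton_of_mem (Finset.mem_univ i)]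
    have h1 : ∀ m ∈ univ \ {i},
        (∑ k ∈ univ.erase m, ∏ j ∈ (univ.erase m).erase k, (x i - x j))
          = ∏ j ∈ (univ.erase i).erase m, (x i - x j) := by
      intro m hm
      have hmi : m ≠ i := by simpa using hm
      rw [Finset.sum_eq_single i]
      · rw [Finset.erase_right_comm]
      · intro k hk hki
        have : i ∈ ((univ : Finset (Fin n)).erase m).erase k :=
          Finset.mem_erase.mpr ⟨fun h => hki h.symm,
            Finset.mem_erase.mpr ⟨fun h => hmi h.symm, Finset.mem_univ i⟩⟩
        exact Finset.prod_eq_zero this (by ring)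
      · intro h
        exact absurd (Finset.mem_erase.mpr ⟨hmi.symm, Finset.mem_univ i⟩) h
    rw [Finset.sum_congr rfl h1]
    have : (univ : Finset (Fin n)) \ {i} = univ.erase i := by
      rw [Finset.sdiff_singleton_eq_erase]
    rw [this]
    ring
  -- key: A * S = f''(x i)
  have hkey : A * (∑ k ∈ univ.erase i, 2 / (x i - x k))
      = (derivative (derivative f)).eval (x i) := by
    rw [hevalB, Finset.mul_sum, Finset.mul_sum]
    apply Finset.sum_congr rfl
    intro k hk
    rw [hAT k hk]
    field_simp [hne k hk]
  -- main evaluation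
  have hmain : (derivative (p * derivative f) - q * derivative f).eval (x i)
      = (derivative f).eval (x i)
          * (p.eval (x i) * ∑ k ∈ univ.erase i, 2 / (x i - x k)
              + p.derivative.eval (x i) - q.eval (x i)) := by
    rw [derivative_mul]
    simp only [eval_sub, eval_add, eval_mul, hevalA]
    rw [← hkey]
    ring
  refine ⟨hmain, ?_⟩
  rw [hmain, mul_eq_zero]
  rw [hevalA] at *
  constructor
  · rintro (h | h)
    · exact absurd h hAne
    · linarith
  · intro h
    right
    linarith
end

section
/- Let n ≥ 1 and let x_1, …, x_n be pairwise distinct real numbers. Then ∑_{k≠i} 2/(x_i − x_k) = x_i holds for all 1 ≤ i ≤ n if and only if there exists λ ∈ ℝ such that the polynomial y(x) = ∏_{k=1}^n (x − x_k) satisfies −y''(x) + x·y'(x) = λ·y(x) identically. -/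
open Polynomial Finset

private lemma deriv_prod' {ι : Type*} [DecidableEq ι] (s : Finset ι) (f : ι → ℝ[X]) :
    derivative (∏ i ∈ s, f i) = ∑ i ∈ s, (∏ j ∈ s.erase i, f j) * derivative (f i) := by
  induction s using Finset.induction_on with
  | empty => simp
  | @insert a s ha ih =>
    rw [Finset.prod_insert ha, derivative_mul, Finset.sum_insert ha, Finset.erase_insert ha,
      ih]
    have h1 : ∀ i ∈ s, (∏ j ∈ (insert a s).erase i, f j) * derivative (f i)
        = f a * ((∏ j ∈ s.erase i, f j) * derivative (f i)) := by
      intro i hi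
      rw [Finset.erase_insert_of_ne (by rintro rfl; exact ha hi),
        Finset.prod_insert (fun h => ha (Finset.mem_of_mem_erase h)), mul_assoc]
    rw [Finset.sum_congr rfl h1, ← Finset.mul_sum]
    ring

theorem stmt_9 (n : ℕ) (hn : 1 ≤ n) (x : Fin n → ℝ) (hx : Function.Injective x) :
    (∀ i : Fin n, ∑ k ∈ univ.erase i, 2 / (x i - x k) = x i) ↔
    (∃ lam : ℝ,
      -derivative (derivative (∏ k, (X - C (x k))))
        + X * derivative (∏ k, (X - C (x k)))
        = C lam * ∏ k, (X - C (x k))) := by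
  classical
  set y : ℝ[X] := ∏ k, (X - C (x k)) with hy
  have hd1 : derivative y = ∑ i, ∏ j ∈ univ.erase i, (X - C (x j)) := by
    rw [hy, deriv_prod']; simp
  -- eval of y at roots
  have hyz : ∀ i : Fin n, eval (x i) y = 0 := by
    intro i
    rw [hy, eval_prod]
    exact Finset.prod_eq_zero (Finset.mem_univ i) (by simp)
  -- eval of y' at roots
  have hdeval : ∀ i : Fin n, eval (x i) (derivative y) = ∏ j ∈ univ.erase i, (x i - x j) := by
    intro i
    rw [hd1, eval_finset_sum, Finset.sum_eq_single i]
    · simp [eval_prod]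
    · intro b _ hbi
      rw [eval_prod]
      exact Finset.prod_eq_zero (Finset.mem_erase.2 ⟨Ne.symm hbi, Finset.mem_univ i⟩) (by simp)
    · simp
  have hdne : ∀ i : Fin n, eval (x i) (derivative y) ≠ 0 := by
    intro i
    rw [hdeval i]
    refine Finset.prod_ne_zero_iff.2 fun j hj => ?_
    exact sub_ne_zero.2 fun h => (Finset.mem_erase.1 hj).1 (hx h).symm
  -- eval of y'' at roots
  have hd2eval : ∀ i : Fin n, eval (x i) (derivative (derivative y))
      = ∑ k ∈ univ.erase i, 2 * ∏ j ∈ (univ.erase i).erase k, (x i - x j) := by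
    intro i
    have hinner : ∀ a : Fin n, a ≠ i →
        eval (x i) (derivative (∏ j ∈ univ.erase a, (X - C (x j))))
          = ∏ j ∈ (univ.erase i).erase a, (x i - x j) := by
      intro a ha
      rw [deriv_prod', eval_finset_sum, Finset.sum_eq_single i]
      · simp only [derivative_sub, derivative_X, derivative_C, sub_zero, mul_one, eval_mul,
          eval_one, eval_prod, eval_sub, eval_X, eval_C]
        rw [Finset.erase_right_comm]
      · intro b hb hbi
        simp only [derivative_sub, derivative_X, derivative_C, sub_zero, mul_one, eval_prod,
          eval_sub, eval_X, eval_C]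
        exact Finset.prod_eq_zero (Finset.mem_erase.2 ⟨Ne.symm hbi,
          Finset.mem_erase.2 ⟨Ne.symm ha, Finset.mem_univ i⟩⟩) (by simp)
      · intro h
        exact absurd (Finset.mem_erase.2 ⟨Ne.symm ha, Finset.mem_univ i⟩) h
    rw [hd1, map_sum, eval_finset_sum]
    have hsplit : ∀ a : Fin n,
        eval (x i) (derivative (∏ j ∈ univ.erase a, (X - C (x j))))
          = if a = i then ∑ b ∈ univ.erase i, ∏ j ∈ (univ.erase i).erase b, (x i - x j)
            else ∏ j ∈ (univ.erase i).erase a, (x i - x j) := by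
      intro a
      by_cases ha : a = i
      · subst ha
        rw [if_pos rfl, deriv_prod', eval_finset_sum]
        refine Finset.sum_congr rfl fun b hb => ?_
        simp [eval_prod]
      · rw [if_neg ha, hinner a ha]
    rw [Finset.sum_congr rfl fun a _ => hsplit a,
      ← Finset.add_sum_erase _ _ (Finset.mem_univ i), if_pos rfl,
      Finset.sum_congr rfl (fun a ha => if_neg (Finset.mem_erase.1 ha).1),
      ← Finset.sum_add_distrib]
    exact Finset.sum_congr rfl fun k hk => by ring
  -- relation between y'' and the sum condition at each root
  have hkey : ∀ i : Fin n, eval (x i) (derivative (derivative y))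
      = (∑ k ∈ univ.erase i, 2 / (x i - x k)) * eval (x i) (derivative y) := by
    intro i
    rw [hd2eval i, hdeval i, Finset.sum_mul]
    refine Finset.sum_congr rfl fun k hk => ?_
    have hne : x i - x k ≠ 0 :=
      sub_ne_zero.2 fun h => (Finset.mem_erase.1 hk).1 (hx h).symm
    rw [← Finset.mul_prod_erase _ _ hk]
    field_simp
  have hyd : y.natDegree = n := by
    rw [hy, natDegree_prod _ _ fun k _ => X_sub_C_ne_zero (x k)]
    simp
  have hymonic : y.Monic := monic_prod_of_monic _ _ fun k _ => monic_X_sub_C (x k)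
  constructor
  · intro h
    refine ⟨(n : ℝ), ?_⟩
    set Q : ℝ[X] := -derivative (derivative y) + X * derivative y - C (n : ℝ) * y with hQ
    have hQeval : ∀ i : Fin n, eval (x i) Q = 0 := by
      intro i
      simp only [hQ, eval_sub, eval_add, eval_neg, eval_mul, eval_X, eval_C, hyz i, mul_zero,
        sub_zero, hkey i, h i]
      ring
    have hd1le : (derivative y).natDegree ≤ n - 1 := by
      have := natDegree_derivative_le y
      rwa [hyd] at this
    have hd2lt : (derivative (derivative y)).natDegree < n := by
      calc (derivative (derivative y)).natDegree ≤ (derivative y).natDegree - 1 :=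
            natDegree_derivative_le _
        _ ≤ n - 1 - 1 := Nat.sub_le_sub_right hd1le 1
        _ < n := by omega
    have hQdeg : Q.natDegree ≤ n := by
      refine le_trans (natDegree_sub_le _ _) (max_le (le_trans (natDegree_add_le _ _)
        (max_le ?_ ?_)) ?_)
      · rw [natDegree_neg]; exact hd2lt.le
      · refine le_trans (natDegree_mul_le) ?_
        rw [natDegree_X]
        omega
      · exact le_trans (natDegree_C_mul_le _ _) hyd.le
    have hQcoeff : Q.coeff n = 0 := by
      have h2 : (derivative (derivative y)).coeff n = 0 :=
        coeff_eq_zero_of_natDegree_lt hd2lt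
      have hc1 : y.coeff n = 1 := by rw [← hyd]; exact hymonic.coeff_natDegree
      have h1 : (X * derivative y).coeff n = (n : ℝ) := by
        have he : n = (n - 1) + 1 := by omega
        rw [he, coeff_X_mul, coeff_derivative, ← he, hc1, one_mul, ← Nat.cast_add_one,
          Nat.sub_add_cancel hn]
      simp only [hQ, coeff_sub, coeff_add, coeff_neg, h2, h1, coeff_C_mul, hc1]
      ring
    have hQ0 : Q = 0 := by
      rcases eq_or_ne Q 0 with h0 | h0
      · exact h0
      · refine Q.eq_zero_of_natDegree_lt_card_of_eval_eq_zero hx hQeval ?_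
        rw [Fintype.card_fin]
        rcases lt_or_eq_of_le hQdeg with hlt | heq
        · exact hlt
        · exfalso
          apply leadingCoeff_ne_zero.2 h0
          rw [leadingCoeff, heq]
          exact hQcoeff
    exact sub_eq_zero.1 hQ0
  · intro ⟨lam, hlam⟩ i
    have := congrArg (eval (x i)) hlam
    simp only [eval_add, eval_neg, eval_mul, eval_X, eval_C, hyz i, mul_zero] at this
    have h2 : (∑ k ∈ univ.erase i, 2 / (x i - x k)) * eval (x i) (derivative y)
        = x i * eval (x i) (derivative y) := by
      rw [← hkey i]
      linarith [this]
    exact mul_right_cancel₀ (hdne i) h2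
end

section
/- Let n ≥ 1 and suppose x_1, …, x_n are pairwise distinct real numbers such that the n-th probabilist's Hermite polynomial factors as He_n(x) = ∏_{k=1}^n (x − x_k). Then for every 1 ≤ i ≤ n, ∑_{k≠i} 2/(x_i − x_k) = x_i. -/
open Polynomial Finset

lemma derivative_hermite' (n : ℕ) :
    derivative (hermite (n + 1)) = ((n : ℤ[X]) + 1) * hermite n := by
  induction n with
  | zero => simp [hermite_one]
  | succ n ih =>
    rw [hermite_succ (n + 1), derivative_sub, derivative_mul, derivative_X, one_mul, ih,
      derivative_mul]
    have hdc : derivative ((n : ℤ[X]) + 1) = 0 := by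
      simp [derivative_natCast]
    rw [hdc, zero_mul, zero_add, hermite_succ n]
    push_cast
    ring

lemma eval_derivative_sub_prod {ι : Type*} [DecidableEq ι] (f : ι → ℝ) (a : ℝ)
    (s : Finset ι) :
    eval a (derivative (∏ k ∈ s, (X - C (f k)))) = ∑ k ∈ s, ∏ j ∈ s.erase k, (a - f j) := by
  induction s using Finset.induction_on with
  | empty => simp
  | @insert c s hcs ih =>
    rw [Finset.prod_insert hcs, derivative_mul, derivative_X_sub_C, one_mul, eval_add, eval_mul,
      eval_sub, eval_X, eval_C, ih, Finset.sum_insert hcs, Finset.erase_insert hcs, eval_prod]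
    simp only [eval_sub, eval_X, eval_C]
    rw [Finset.mul_sum]
    congr 1
    · ring_nf
      refine Finset.sum_congr rfl fun k hk => ?_
      have hkc : k ≠ c := fun h => hcs (h ▸ hk)
      rw [Finset.erase_insert_of_ne (Ne.symm hkc),
        Finset.prod_insert (fun h => hcs (Finset.mem_of_mem_erase h))]
      ring

theorem stmt_10 (n : ℕ) (hn : 1 ≤ n) (x : Fin n → ℝ) (hx : Function.Injective x)
    (hfac : (Polynomial.hermite n).map (Int.castRingHom ℝ) = ∏ k, (X - C (x k))) :
    ∀ i : Fin n, ∑ k ∈ univ.erase i, 2 / (x i - x k) = x i := by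
  intro i
  obtain ⟨m, rfl⟩ : ∃ m, n = m + 1 := ⟨n - 1, (Nat.succ_pred_eq_of_pos hn).symm⟩
  have hode : X * derivative ((hermite (m + 1)).map (Int.castRingHom ℝ))
      = ((m : ℝ[X]) + 1) * (hermite (m + 1)).map (Int.castRingHom ℝ)
        + derivative (derivative ((hermite (m + 1)).map (Int.castRingHom ℝ))) := by
    have h1 : derivative ((hermite (m + 1)).map (Int.castRingHom ℝ))
        = ((m : ℝ[X]) + 1) * (hermite m).map (Int.castRingHom ℝ) := by
      rw [Polynomial.derivative_map, derivative_hermite', Polynomial.map_mul]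
      simp
    have h2 : (hermite (m + 1)).map (Int.castRingHom ℝ)
        = X * (hermite m).map (Int.castRingHom ℝ)
          - derivative ((hermite m).map (Int.castRingHom ℝ)) := by
      rw [hermite_succ, Polynomial.map_sub, Polynomial.map_mul, Polynomial.derivative_map,
        Polynomial.map_X]
    rw [h1, derivative_mul, h2]
    have hdc : derivative ((m : ℝ[X]) + 1) = 0 := by simp [derivative_natCast]
    rw [hdc, zero_mul, zero_add]
    ring
  set q : ℝ[X] := ∏ k ∈ univ.erase i, (X - C (x k)) with hq
  have hpq : (hermite (m + 1)).map (Int.castRingHom ℝ) = (X - C (x i)) * q := by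
    rw [hfac, hq]
    exact (Finset.mul_prod_erase univ (fun k => X - C (x k)) (mem_univ i)).symm
  have hQ : eval (x i) q = ∏ k ∈ univ.erase i, (x i - x k) := by
    rw [hq]; simp [eval_prod]
  have hQne : eval (x i) q ≠ 0 := by
    rw [hQ]
    refine Finset.prod_ne_zero_iff.mpr fun k hk => sub_ne_zero.mpr fun h => ?_
    exact (Finset.mem_erase.mp hk).1 (hx h.symm)
  have hd' : derivative ((hermite (m + 1)).map (Int.castRingHom ℝ))
      = q + (X - C (x i)) * derivative q := by
    rw [hpq, derivative_mul, derivative_X_sub_C, one_mul]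
  have hd1 : eval (x i) (derivative ((hermite (m + 1)).map (Int.castRingHom ℝ)))
      = eval (x i) q := by
    rw [hd']; simp
  have hd2 : eval (x i) (derivative (derivative ((hermite (m + 1)).map (Int.castRingHom ℝ))))
      = 2 * eval (x i) (derivative q) := by
    rw [hd', derivative_add, derivative_mul, derivative_X_sub_C, one_mul]
    simp
    ring
  have hkey : x i * eval (x i) q = 2 * eval (x i) (derivative q) := by
    have h := congrArg (eval (x i)) hode
    simp only [eval_add, eval_mul, eval_X, hd1, hd2] at h
    have hp0 : eval (x i) ((hermite (m + 1)).map (Int.castRingHom ℝ)) = 0 := by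
      rw [hpq]; simp
    rw [hp0, mul_zero, zero_add] at h
    exact h
  have hdq : eval (x i) (derivative q)
      = ∑ k ∈ univ.erase i, ∏ j ∈ (univ.erase i).erase k, (x i - x j) := by
    rw [hq, eval_derivative_sub_prod]
  have hterm : ∀ k ∈ univ.erase i, 2 / (x i - x k)
      = 2 * (∏ j ∈ (univ.erase i).erase k, (x i - x j)) / eval (x i) q := by
    intro k hk
    have hQk : eval (x i) q
        = (x i - x k) * ∏ j ∈ (univ.erase i).erase k, (x i - x j) := by
      rw [hQ]
      exact (Finset.mul_prod_erase _ (fun k => x i - x k) hk).symm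
    have hne : (x i - x k) ≠ 0 :=
      sub_ne_zero.mpr fun h => (Finset.mem_erase.mp hk).1 (hx h.symm)
    have hPne : (∏ j ∈ (univ.erase i).erase k, (x i - x j)) ≠ 0 := by
      intro h0; rw [hQk, h0, mul_zero] at hQne; exact hQne rfl
    rw [hQk]
    field_simp
  calc ∑ k ∈ univ.erase i, 2 / (x i - x k)
      = ∑ k ∈ univ.erase i, 2 * (∏ j ∈ (univ.erase i).erase k, (x i - x j)) / eval (x i) q :=
        Finset.sum_congr rfl hterm
    _ = (2 * eval (x i) (derivative q)) / eval (x i) q := by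
        rw [hdq, ← Finset.sum_div, Finset.mul_sum]
    _ = x i := by rw [← hkey, mul_div_assoc, div_self hQne, mul_one]
end

section
/- Let α, β > −1, let n ≥ 1 and let x_1, …, x_n be pairwise distinct real numbers in (−1, 1). Then the Stieltjes electrostatic equilibrium ∑_{k≠i} 1/(x_k − x_i) = (α+1)/(2(x_i − 1)) + (β+1)/(2(x_i + 1)) holds for all 1 ≤ i ≤ n if and only if there exists λ ∈ ℝ such that the polynomial y(x) = ∏_{k=1}^n (x − x_k) satisfies (1 − x²)·y''(x) + (β − α − (α+β+2)x)·y'(x) + λ·y(x) = 0 identically. -/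
/-!
Let `y = ∏ (X - x k)` and `L y = (1 - X²) y'' + (β - α - (α + β + 2) X) y'`.
At a simple root `x i`, writing `y = (X - x i) q` gives `y'(x i) = q(x i) ≠ 0` and
`y''(x i) = 2 q'(x i) = 2 y'(x i) ∑_{k ≠ i} 1 / (x i - x k)`, so `(L y)(x i)` is `y'(x i)` times
`2 (1 - x i²) ∑_{k ≠ i} 1 / (x i - x k) + β - α - (α + β + 2) x i`; for `x i ≠ ±1` the
vanishing of the second factor is the equilibrium condition. Since `deg L y ≤ deg y`, the
polynomial `L y` vanishes at all `n` roots of `y` exactly when it is a constant multiple of `y`.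
-/

open Polynomial Finset Lagrange

theorem natDegree_mul_iterate_derivative_le {R : Type*} [Semiring R] {A p : R[X]} {k : ℕ}
    (hA : A.natDegree ≤ k) :
    (A * derivative^[k] p).natDegree ≤ p.natDegree := by
  rcases lt_or_ge p.natDegree k with hp | hp
  · simp [iterate_derivative_eq_zero hp]
  · have := natDegree_iterate_derivative p k
    exact natDegree_mul_le.trans (by omega)

theorem ne_of_mem_erase_of_injOn {α ι : Type*} [DecidableEq ι] {s : Finset ι} {v : ι → α}
    (hvs : Set.InjOn v s) {i : ι} (hi : i ∈ s) : ∀ j ∈ s.erase i, v i ≠ v j :=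
  fun _ hj h => (mem_erase.mp hj).1 (hvs (mem_of_mem_erase hj) hi h.symm)

theorem exists_add_C_mul_eq_zero_iff {R : Type*} [CommRing R] (p q : R[X]) :
    (∃ lam : R, p + C lam * q = 0) ↔ ∃ c : R, p = C c * q :=
  ⟨fun ⟨lam, h⟩ => ⟨-lam, by rw [C_neg, neg_mul, ← add_eq_zero_iff_eq_neg, h]⟩,
    fun ⟨c, h⟩ => ⟨-c, by rw [h, C_neg, neg_mul, add_neg_cancel]⟩⟩

section Nodal

variable {F ι : Type*} [Field F] {s : Finset ι} {v : ι → F}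

theorem eq_C_mul_nodal_of_eval_eq_zero (hvs : Set.InjOn v s) {p : F[X]}
    (hp : p.natDegree ≤ #s) (heval : ∀ i ∈ s, eval (v i) p = 0) :
    p = C (p.coeff #s) * nodal s v := by
  refine eq_of_degree_sub_lt_of_eval_index_eq s hvs ?_ fun i hi => ?_
  · refine (degree_lt_iff_coeff_zero _ _).mpr fun m hm => ?_
    rcases hm.eq_or_lt with rfl | hm
    · rw [coeff_sub, coeff_C_mul, ← natDegree_nodal (v := v), nodal_monic.coeff_natDegree]
      ring
    · rw [coeff_sub, coeff_C_mul, coeff_eq_zero_of_natDegree_lt (hp.trans_lt hm),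
        coeff_eq_zero_of_natDegree_lt (p := nodal s v) (by rwa [natDegree_nodal])]
      ring
  · rw [heval i hi, eval_mul, eval_nodal_at_node hi, mul_zero]

variable [DecidableEq ι]

theorem eval_derivative_nodal_eq_mul_sum_inv {t : F} (ht : ∀ i ∈ s, t ≠ v i) :
    eval t (derivative (nodal s v)) = eval t (nodal s v) * ∑ i ∈ s, (t - v i)⁻¹ := by
  rw [derivative_nodal, eval_finsetSum, mul_sum]
  refine sum_congr rfl fun i hi => ?_
  rw [nodal_eq_mul_nodal_erase hi, eval_mul, eval_sub, eval_X, eval_C,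
    mul_comm (t - v i), mul_assoc, mul_inv_cancel₀ (sub_ne_zero.mpr (ht i hi)), mul_one]

theorem eval_derivative_derivative_nodal_at_node (hvs : Set.InjOn v s) {i : ι} (hi : i ∈ s) :
    eval (v i) (derivative (derivative (nodal s v))) =
      2 * eval (v i) (derivative (nodal s v)) * ∑ j ∈ s.erase i, (v i - v j)⁻¹ := by
  rw [eval_nodal_derivative_eval_node_eq hi, mul_assoc,
    ← eval_derivative_nodal_eq_mul_sum_inv (ne_of_mem_erase_of_injOn hvs hi),
    nodal_eq_mul_nodal_erase hi]
  simp only [derivative_mul, derivative_sub, derivative_X, derivative_C, sub_zero, one_mul,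
    derivative_add, eval_add, eval_mul, eval_sub, eval_X, eval_C, sub_self, zero_mul]
  ring

theorem eval_mul_derivative_derivative_add_nodal_at_node (A B : F[X]) (hvs : Set.InjOn v s)
    {i : ι} (hi : i ∈ s) :
    eval (v i) (A * derivative (derivative (nodal s v)) + B * derivative (nodal s v)) =
      eval (v i) (derivative (nodal s v)) *
        (2 * eval (v i) A * ∑ j ∈ s.erase i, (v i - v j)⁻¹ + eval (v i) B) := by
  rw [eval_add, eval_mul, eval_mul, eval_derivative_derivative_nodal_at_node hvs hi]
  ring

theorem eval_derivative_nodal_at_node_ne_zero (hvs : Set.InjOn v s) {i : ι} (hi : i ∈ s) :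
    eval (v i) (derivative (nodal s v)) ≠ 0 := by
  rw [eval_nodal_derivative_eval_node_eq hi]
  exact eval_nodal_not_at_node (ne_of_mem_erase_of_injOn hvs hi)

theorem exists_mul_derivative_derivative_add_nodal_eq_iff {A B : F[X]} (hA : A.natDegree ≤ 2)
    (hB : B.natDegree ≤ 1) (hvs : Set.InjOn v s) :
    (∃ c : F, A * derivative (derivative (nodal s v)) + B * derivative (nodal s v) =
        C c * nodal s v) ↔
      ∀ i ∈ s, 2 * eval (v i) A * ∑ j ∈ s.erase i, (v i - v j)⁻¹ + eval (v i) B = 0 := by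
  constructor
  · rintro ⟨c, hc⟩ i hi
    have := congrArg (eval (v i)) hc
    rw [eval_mul_derivative_derivative_add_nodal_at_node A B hvs hi, eval_mul,
      eval_nodal_at_node hi, mul_zero] at this
    exact (mul_eq_zero.mp this).resolve_left (eval_derivative_nodal_at_node_ne_zero hvs hi)
  · intro h
    refine ⟨_, eq_C_mul_nodal_of_eval_eq_zero hvs ?_ fun i hi => ?_⟩
    · rw [← natDegree_nodal (s := s) (v := v)]
      exact (natDegree_add_le _ _).trans (max_le (natDegree_mul_iterate_derivative_le (k := 2) hA)
        (natDegree_mul_iterate_derivative_le (k := 1) hB))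
    · rw [eval_mul_derivative_derivative_add_nodal_at_node A B hvs hi, h i hi, mul_zero]

end Nodal

theorem jacobi_equilibrium_iff (α β t S : ℝ) (h₁ : t ≠ 1) (h₂ : t ≠ -1) :
    -S = (α + 1) / (2 * (t - 1)) + (β + 1) / (2 * (t + 1)) ↔
      2 * (1 - t ^ 2) * S + (β - α - (α + β + 2) * t) = 0 := by
  have h₁' : t - 1 ≠ 0 := sub_ne_zero.mpr h₁
  have h₂' : t + 1 ≠ 0 := fun h => h₂ (eq_neg_of_add_eq_zero_left h)
  rw [div_add_div _ _ (mul_ne_zero two_ne_zero h₁') (mul_ne_zero two_ne_zero h₂'),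
    eq_div_iff (by positivity)]
  constructor <;> intro h
  · linear_combination h / 2
  · linear_combination 2 * h

theorem stmt_12_general (α β : ℝ)
    (n : ℕ) (x : Fin n → ℝ) (hx : Function.Injective x)
    (hmem : ∀ i, x i ∈ Set.Ioo (-1 : ℝ) 1) :
    (∀ i : Fin n, ∑ k ∈ univ.erase i, 1 / (x k - x i)
        = (α + 1) / (2 * (x i - 1)) + (β + 1) / (2 * (x i + 1))) ↔
    (∃ lam : ℝ,
      (1 - X ^ 2) * derivative (derivative (∏ k, (X - C (x k))))
        + (C (β - α) - C (α + β + 2) * X) * derivative (∏ k, (X - C (x k)))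
        + C lam * ∏ k, (X - C (x k)) = 0) := by
  rw [← nodal_eq, exists_add_C_mul_eq_zero_iff,
    exists_mul_derivative_derivative_add_nodal_eq_iff (by compute_degree) (by compute_degree)
      hx.injOn]
  refine forall_congr' fun i => ?_
  have hsum :
      ∑ k ∈ univ.erase i, 1 / (x k - x i) = -∑ k ∈ univ.erase i, (x i - x k)⁻¹ := by
    rw [← sum_neg_distrib]
    exact sum_congr rfl fun k _ => by rw [one_div, neg_inv, neg_sub]
  rw [hsum, jacobi_equilibrium_iff α β (x i) _ (hmem i).2.ne (hmem i).1.ne']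
  simp only [mem_univ, true_imp_iff, eval_sub, eval_one, eval_pow, eval_X, eval_C, eval_mul]

theorem stmt_12 (α β : ℝ) (hα : -1 < α) (hβ : -1 < β)
    (n : ℕ) (hn : 1 ≤ n) (x : Fin n → ℝ) (hx : Function.Injective x)
    (hmem : ∀ i, x i ∈ Set.Ioo (-1 : ℝ) 1) :
    (∀ i : Fin n, ∑ k ∈ univ.erase i, 1 / (x k - x i)
        = (α + 1) / (2 * (x i - 1)) + (β + 1) / (2 * (x i + 1))) ↔
    (∃ lam : ℝ,
      (1 - X ^ 2) * derivative (derivative (∏ k, (X - C (x k))))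
        + (C (β - α) - C (α + β + 2) * X) * derivative (∏ k, (X - C (x k)))
        + C lam * ∏ k, (X - C (x k)) = 0) :=
  stmt_12_general α β n x hx hmem
end

section
/- Let n ≥ 1 and let x_1, …, x_n be pairwise distinct real numbers in (−1, 1). Then (1 − x_i²)·∑_{k≠i} 2/(x_i − x_k) = 2·x_i holds for all 1 ≤ i ≤ n if and only if there exists λ ∈ ℝ such that the polynomial y(x) = ∏_{k=1}^n (x − x_k) satisfies ((1 − x²)·y'(x))' + λ·y(x) = 0 identically. -/
open Polynomial Finset

/-! At a simple root `xᵢ` of `y = ∏ (X - xₖ)` the logarithmic derivative of `y / (X - xᵢ)` gives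
`y''(xᵢ) = y'(xᵢ) ∑_{k ≠ i} 2 / (xᵢ - xₖ)`, so for any `a` the value of `(a y')'` at `xᵢ` is
`y'(xᵢ) (a(xᵢ) ∑_{k ≠ i} 2 / (xᵢ - xₖ) + a'(xᵢ))` with `y'(xᵢ) ≠ 0`. Hence the equations at the
nodes say exactly that `y ∣ (a y')'`. When `deg a ≤ 2` the polynomial `(a y')'` has degree at most
`deg y`, and as `y` is monic this divisibility means `(a y')' = -λ y` for a constant `λ`. -/

theorem Polynomial.natDegree_derivative_mul_derivative_le {R : Type*} [Semiring R] {a : R[X]}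
    (ha : a.natDegree ≤ 2) (p : R[X]) :
    (derivative (a * derivative p)).natDegree ≤ p.natDegree := by
  rcases Nat.eq_zero_or_pos p.natDegree with hp | hp
  · rw [eq_C_of_natDegree_eq_zero hp]
    simp
  · calc (derivative (a * derivative p)).natDegree
        ≤ (a * derivative p).natDegree - 1 := natDegree_derivative_le _
      _ ≤ 2 + (p.natDegree - 1) - 1 :=
        Nat.sub_le_sub_right (natDegree_mul_le.trans (add_le_add ha (natDegree_derivative_le p))) 1
      _ = p.natDegree := by omega

namespace Lagrange

variable {F ι : Type*} [Field F] {s : Finset ι} {v : ι → F}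

theorem nodal_dvd_of_eval_eq_zero (hvs : Set.InjOn v s) {p : F[X]}
    (hp : ∀ i ∈ s, eval (v i) p = 0) : nodal s v ∣ p := by
  refine Finset.prod_dvd_of_coprime (fun i hi j hj hij => ?_) fun i hi =>
    dvd_iff_isRoot.mpr (hp i hi)
  exact isCoprime_X_sub_C_of_isUnit_sub (sub_ne_zero.mpr fun h => hij (hvs hi hj h)).isUnit

variable [DecidableEq ι]

theorem eval_derivative_nodal_eq_mul_sum_inv {t : F} (ht : ∀ j ∈ s, t ≠ v j) :
    eval t (derivative (nodal s v)) = eval t (nodal s v) * ∑ j ∈ s, (t - v j)⁻¹ := by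
  rw [derivative_nodal, eval_finsetSum, mul_sum]
  refine sum_congr rfl fun j hj => ?_
  rw [nodal_eq_mul_nodal_erase hj, eval_mul, eval_sub, eval_X, eval_C,
    mul_comm (t - v j), mul_assoc, mul_inv_cancel₀ (sub_ne_zero.mpr (ht j hj)), mul_one]

theorem eval_derivative_derivative_nodal_at_node (hvs : Set.InjOn v s) {i : ι} (hi : i ∈ s) :
    eval (v i) (derivative (derivative (nodal s v))) =
      2 * eval (v i) (nodal (s.erase i) v) * ∑ j ∈ s.erase i, (v i - v j)⁻¹ := by
  have hnode : ∀ j ∈ s.erase i, v i ≠ v j := fun j hj =>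
    fun h => (ne_of_mem_erase hj) (hvs (mem_of_mem_erase hj) hi h.symm)
  rw [nodal_eq_mul_nodal_erase hi, derivative_mul, derivative_add, derivative_mul,
    derivative_mul, derivative_X_sub_C]
  simp only [derivative_one, eval_add, eval_mul, eval_sub, eval_X, eval_C, eval_one, eval_zero,
    sub_self]
  rw [eval_derivative_nodal_eq_mul_sum_inv hnode]
  ring

theorem eval_derivative_mul_derivative_nodal_at_node (hvs : Set.InjOn v s) {i : ι} (hi : i ∈ s)
    (a : F[X]) :
    eval (v i) (derivative (a * derivative (nodal s v))) =
      eval (v i) (nodal (s.erase i) v) *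
        (eval (v i) a * ∑ j ∈ s.erase i, 2 / (v i - v j) + eval (v i) (derivative a)) := by
  rw [derivative_mul, eval_add, eval_mul, eval_mul, eval_nodal_derivative_eval_node_eq hi,
    eval_derivative_derivative_nodal_at_node hvs hi]
  simp only [div_eq_mul_inv, ← mul_sum]
  ring

theorem exists_derivative_mul_derivative_nodal_add_C_mul_eq_zero_iff (hvs : Set.InjOn v s)
    {a : F[X]} (ha : a.natDegree ≤ 2) :
    (∃ lam : F, derivative (a * derivative (nodal s v)) + C lam * nodal s v = 0) ↔
      ∀ i ∈ s, eval (v i) a * ∑ j ∈ s.erase i, 2 / (v i - v j) + eval (v i) (derivative a) = 0 := by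
  have hnodes := fun i (hi : i ∈ s) => eval_derivative_mul_derivative_nodal_at_node hvs hi a
  constructor
  · rintro ⟨lam, hlam⟩ i hi
    have hweight : eval (v i) (nodal (s.erase i) v) ≠ 0 := fun h =>
      nodalWeight_ne_zero hvs hi (by rw [nodalWeight_eq_eval_nodal_erase_inv, h, inv_zero])
    have hzero := congrArg (eval (v i)) hlam
    rw [eval_add, eval_mul, eval_nodal_at_node hi, mul_zero, add_zero, hnodes i hi,
      eval_zero] at hzero
    exact (mul_eq_zero.mp hzero).resolve_left hweight
  · intro h
    set P := derivative (a * derivative (nodal s v))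
    have hdvd : nodal s v ∣ P :=
      nodal_dvd_of_eval_eq_zero hvs fun i hi => by rw [hnodes i hi, h i hi, mul_zero]
    refine ⟨-P.leadingCoeff, ?_⟩
    rw [map_neg, neg_mul, ← eq_leadingCoeff_mul_of_monic_of_dvd_of_natDegree_le nodal_monic hdvd
      (natDegree_derivative_mul_derivative_le ha _), add_neg_cancel]

end Lagrange

theorem stmt_13_general (n : ℕ) (x : Fin n → ℝ) (hx : Function.Injective x) :
    (∀ i : Fin n, (1 - x i ^ 2) * ∑ k ∈ univ.erase i, 2 / (x i - x k) = 2 * x i) ↔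
    (∃ lam : ℝ,
      derivative ((1 - X ^ 2) * derivative (∏ k, (X - C (x k))))
        + C lam * ∏ k, (X - C (x k)) = 0) := by
  rw [← Lagrange.nodal_eq, Lagrange.exists_derivative_mul_derivative_nodal_add_C_mul_eq_zero_iff
    hx.injOn (by compute_degree)]
  refine forall_congr' fun i => ?_
  simp only [mem_univ, forall_const, eval_sub, eval_one, eval_pow, eval_X, derivative_sub,
    derivative_one, derivative_X_pow, eval_mul, eval_C, eval_zero]
  constructor <;> intro h <;> push_cast at * <;> linarith

theorem stmt_13 (n : ℕ) (hn : 1 ≤ n) (x : Fin n → ℝ) (hx : Function.Injective x)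
    (hmem : ∀ i, x i ∈ Set.Ioo (-1 : ℝ) 1) :
    (∀ i : Fin n, (1 - x i ^ 2) * ∑ k ∈ univ.erase i, 2 / (x i - x k) = 2 * x i) ↔
    (∃ lam : ℝ,
      derivative ((1 - X ^ 2) * derivative (∏ k, (X - C (x k))))
        + C lam * ∏ k, (X - C (x k)) = 0) :=
  stmt_13_general n x hx
end

section
/- Let n ≥ 1 and let x_1, …, x_n be pairwise distinct positive real numbers. Then x_i·∑_{k≠i} 2/(x_i − x_k) = x_i − 1 holds for all 1 ≤ i ≤ n if and only if the polynomial y(x) = ∏_{k=1}^n (x − x_k) satisfies x·y''(x) + (1 − x)·y'(x) + n·y(x) = 0 identically. -/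
/-! Write `y = ∏ₖ (X - xₖ) = (X - xᵢ) qᵢ`. Then `y'(xᵢ) = qᵢ(xᵢ) ≠ 0` and `y''(xᵢ) = 2 qᵢ'(xᵢ)`,
and `qᵢ'(xᵢ) = qᵢ(xᵢ) ∑_{k ≠ i} 1/(xᵢ - xₖ)` (logarithmic derivative). So `L y := x y'' + (1 - x) y' + n y`
evaluated at `xᵢ` is `qᵢ(xᵢ) (xᵢ ∑_{k ≠ i} 2/(xᵢ - xₖ) - (xᵢ - 1))`: the equations say exactly that
`L y` vanishes at every `xᵢ`. Since the leading terms of `-x y'` and `n y` cancel, `L y` has degree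
`< n`, so vanishing at the `n` distinct points `xᵢ` forces `L y = 0`. -/

open Polynomial Finset

section Laguerre

variable {R : Type*} [CommRing R]

noncomputable def laguerreOperator (n : ℕ) (y : R[X]) : R[X] :=
  X * derivative (derivative y) + (1 - X) * derivative y + C (n : R) * y

lemma degree_laguerreOperator_lt {n : ℕ} {y : R[X]} (hy : y.natDegree ≤ n) :
    (laguerreOperator n y).degree < n := by
  have hcoeff : ∀ k, n < k → y.coeff k = 0 :=
    fun k hk => coeff_eq_zero_of_natDegree_lt (hy.trans_lt hk)
  rw [degree_lt_iff_coeff_zero]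
  intro m hm
  have hm : n ≤ m := by exact_mod_cast hm
  cases m with
  | zero =>
    obtain rfl : n = 0 := by omega
    simp [laguerreOperator, coeff_derivative, hcoeff 1 one_pos]
  | succ k =>
    have htop : (n - (k + 1 : R)) * y.coeff (k + 1) = 0 := by
      rcases hm.eq_or_lt with rfl | hlt
      · simp
      · simp [hcoeff _ hlt]
    simp only [laguerreOperator, sub_mul, one_mul, coeff_add, coeff_sub, coeff_X_mul,
      coeff_C_mul, coeff_derivative, hcoeff (k + 1 + 1) (by omega)]
    linear_combination htop

lemma eval_laguerreOperator_X_sub_C_mul (n : ℕ) (a : R) (q : R[X]) :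
    eval a (laguerreOperator n ((X - C a) * q)) =
      2 * a * eval a (derivative q) + (1 - a) * eval a q := by
  simp only [laguerreOperator, derivative_mul, derivative_sub, derivative_X, derivative_C,
    sub_zero, one_mul, derivative_add, eval_add, eval_mul, eval_sub, eval_X, eval_C, eval_one,
    sub_self, zero_mul]
  ring

end Laguerre

lemma eval_derivative_prod_X_sub_C {K ι : Type*} [Field K] (s : Finset ι) (a : ι → K) {t : K}
    (ht : ∀ k ∈ s, t ≠ a k) :
    eval t (derivative (∏ k ∈ s, (X - C (a k)))) =
      eval t (∏ k ∈ s, (X - C (a k))) * ∑ k ∈ s, (t - a k)⁻¹ := by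
  classical
  induction s using Finset.induction_on with
  | empty => simp
  | insert j s hj ih =>
    have hj' : t - a j ≠ 0 := sub_ne_zero.2 (ht j (mem_insert_self j s))
    rw [prod_insert hj, sum_insert hj, derivative_mul, eval_add, eval_mul, eval_mul,
      ih fun k hk => ht k (mem_insert_of_mem hk)]
    simp only [derivative_sub, derivative_X, derivative_C, sub_zero, eval_one, eval_sub, eval_X,
      eval_C, eval_mul]
    field_simp

lemma eval_laguerreOperator_prod_X_sub_C_eq_zero_iff {K ι : Type*} [Field K] [Fintype ι]
    [DecidableEq ι] (n : ℕ) {x : ι → K} (hx : Function.Injective x) (i : ι) :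
    eval (x i) (laguerreOperator n (∏ k, (X - C (x k)))) = 0 ↔
      x i * ∑ k ∈ univ.erase i, 2 / (x i - x k) = x i - 1 := by
  have hne : ∀ k ∈ univ.erase i, x i ≠ x k := fun k hk => hx.ne (ne_of_mem_erase hk).symm
  set q : K[X] := ∏ k ∈ univ.erase i, (X - C (x k))
  have hq : eval (x i) q ≠ 0 := by
    simpa [q, eval_prod, prod_ne_zero_iff, sub_eq_zero] using hne
  have hfactor : 2 * x i * (eval (x i) q * ∑ k ∈ univ.erase i, (x i - x k)⁻¹)
      + (1 - x i) * eval (x i) q =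
      eval (x i) q * (x i * ∑ k ∈ univ.erase i, 2 / (x i - x k) - (x i - 1)) := by
    simp only [div_eq_mul_inv, ← mul_sum]
    ring
  rw [← mul_prod_erase univ _ (mem_univ i), eval_laguerreOperator_X_sub_C_mul,
    eval_derivative_prod_X_sub_C _ _ hne, hfactor, mul_eq_zero, sub_eq_zero, or_iff_right hq]

theorem stmt_14_general (n : ℕ) (x : Fin n → ℝ) (hx : Function.Injective x) :
    (∀ i : Fin n, x i * ∑ k ∈ univ.erase i, 2 / (x i - x k) = x i - 1) ↔
    X * derivative (derivative (∏ k, (X - C (x k))))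
      + (1 - X) * derivative (∏ k, (X - C (x k)))
      + C (n : ℝ) * ∏ k, (X - C (x k)) = 0 := by
  change _ ↔ laguerreOperator n (∏ k, (X - C (x k))) = 0
  simp_rw [← eval_laguerreOperator_prod_X_sub_C_eq_zero_iff n hx]
  constructor
  · intro h
    refine eq_zero_of_degree_lt_of_eval_index_eq_zero (s := univ) hx.injOn ?_ fun i _ => h i
    simpa using degree_laguerreOperator_lt (natDegree_finsetProd_X_sub_C_eq_card univ x).le
  · intro h i
    rw [h, eval_zero]

theorem stmt_14 (n : ℕ) (hn : 1 ≤ n) (x : Fin n → ℝ) (hx : Function.Injective x)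
    (hpos : ∀ i, 0 < x i) :
    (∀ i : Fin n, x i * ∑ k ∈ univ.erase i, 2 / (x i - x k) = x i - 1) ↔
    X * derivative (derivative (∏ k, (X - C (x k))))
      + (1 - X) * derivative (∏ k, (X - C (x k)))
      + C (n : ℝ) * ∏ k, (X - C (x k)) = 0 :=
  stmt_14_general n x hx
end

section
/- Let n ≥ 2 and set x_i = cos((2i − 1)π/(2n)) for 1 ≤ i ≤ n. Then the points x_1, …, x_n are pairwise distinct and satisfy (1 − x_i²)·∑_{k≠i} 2/(x_i − x_k) = x_i for all 1 ≤ i ≤ n. -/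
open Finset Real
section ChebAux
open Polynomial Polynomial.Chebyshev



private lemma cheb_natDegree_le (m : ℕ) : (T ℝ m).natDegree ≤ m := by
  induction m using Nat.twoStepInduction with
  | zero => simp
  | one => simp
  | more m h1 h2 =>
    rw [show ((m + 2 : ℕ) : ℤ) = (m : ℤ) + 2 by push_cast; ring, T_add_two]
    refine le_trans (natDegree_sub_le _ _) (max_le ?_ (by omega))
    refine le_trans (natDegree_mul_le) ?_
    have : (2 * X : ℝ[X]).natDegree ≤ 1 :=
      le_trans natDegree_mul_le (by simp)
    have h2' : (T ℝ ((m:ℤ) + 1)).natDegree ≤ m + 1 := by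
      rw [show ((m:ℤ) + 1) = ((m + 1 : ℕ) : ℤ) by push_cast; ring]; exact h2
    omega

private lemma cheb_coeff (m : ℕ) : (T ℝ (m + 1 : ℕ)).coeff (m + 1) = 2 ^ m := by
  induction m using Nat.twoStepInduction with
  | zero => simp
  | one =>
    rw [show ((1 + 1 : ℕ) : ℤ) = (0 : ℤ) + 2 by norm_num, T_add_two]
    norm_num [coeff_sub, show ((2 : ℝ[X]) * X * T ℝ (0+1)) = C 2 * (X * X) by
      simp [T_one, map_ofNat]; ring, coeff_C_mul, coeff_X_mul,
      show (X : ℝ[X]) * X = X^2 by ring, coeff_one]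
  | more m h1 h2 =>
    rw [show ((m + 2 + 1 : ℕ) : ℤ) = ((m:ℤ) + 1) + 2 by push_cast; ring, T_add_two]
    have e1 : ((m:ℤ) + 1 + 1) = ((m + 1 + 1 : ℕ) : ℤ) := by push_cast; ring
    have e2 : ((m:ℤ) + 1) = ((m + 1 : ℕ) : ℤ) := by push_cast; ring
    rw [e1, e2, coeff_sub]
    have hz : (T ℝ ((m + 1 : ℕ) : ℤ)).coeff (m + 2 + 1) = 0 := by
      apply coeff_eq_zero_of_natDegree_lt
      exact lt_of_le_of_lt (cheb_natDegree_le (m+1)) (by omega)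
    rw [hz, show ((2 : ℝ[X]) * X * T ℝ ((m + 1 + 1 : ℕ) : ℤ)) = C 2 * (X * T ℝ ((m + 1 + 1 : ℕ) : ℤ)) by rw [map_ofNat]; ring]
    rw [coeff_C_mul, show m + 2 + 1 = (m + 1 + 1) + 1 by ring, coeff_X_mul, h2]
    ring

private lemma cheb_sin_mul (n : ℕ) (θ : ℝ) :
    Real.sin θ * (derivative (T ℝ n)).eval (Real.cos θ) = (n : ℝ) * Real.sin ((n : ℝ) * θ) := by
  have h1 : HasDerivAt (fun t : ℝ => (T ℝ n).eval (Real.cos t))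
      ((derivative (T ℝ n)).eval (Real.cos θ) * -Real.sin θ) θ :=
    ((T ℝ n).hasDerivAt (Real.cos θ)).comp θ (Real.hasDerivAt_cos θ)
  have h2 : HasDerivAt (fun t : ℝ => Real.cos ((n : ℝ) * t))
      (-Real.sin ((n : ℝ) * θ) * ((n : ℝ) * 1)) θ :=
    (Real.hasDerivAt_cos ((n : ℝ) * θ)).comp θ ((hasDerivAt_id θ).const_mul (n : ℝ))
  have heq : (fun t : ℝ => (T ℝ n).eval (Real.cos t)) = fun t : ℝ => Real.cos ((n : ℝ) * t) := by
    funext t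
    have := T_real_cos t (n : ℤ)
    push_cast at this
    exact this
  rw [heq] at h1
  have := h1.unique h2
  linear_combination -this

private lemma cheb_ode (n : ℕ) (θ : ℝ) (hθ : Real.cos ((n : ℝ) * θ) = 0) :
    (1 - Real.cos θ ^ 2) * (derivative (derivative (T ℝ n))).eval (Real.cos θ)
      = Real.cos θ * (derivative (T ℝ n)).eval (Real.cos θ) := by
  have h1 : HasDerivAt (fun t : ℝ => Real.sin t * (derivative (T ℝ n)).eval (Real.cos t))
      (Real.cos θ * (derivative (T ℝ n)).eval (Real.cos θ) +
        Real.sin θ * ((derivative (derivative (T ℝ n))).eval (Real.cos θ) * -Real.sin θ)) θ :=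
    (Real.hasDerivAt_sin θ).mul
      (((derivative (T ℝ n)).hasDerivAt (Real.cos θ)).comp θ (Real.hasDerivAt_cos θ))
  have h2 : HasDerivAt (fun t : ℝ => (n : ℝ) * Real.sin ((n : ℝ) * t))
      ((n : ℝ) * (Real.cos ((n : ℝ) * θ) * ((n : ℝ) * 1))) θ :=
    ((Real.hasDerivAt_sin ((n : ℝ) * θ)).comp θ ((hasDerivAt_id θ).const_mul (n : ℝ))).const_mul (n : ℝ)
  have heq : (fun t : ℝ => Real.sin t * (derivative (T ℝ n)).eval (Real.cos t))
      = fun t : ℝ => (n : ℝ) * Real.sin ((n : ℝ) * t) := funext (cheb_sin_mul n)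
  rw [heq] at h1
  have key := h1.unique h2
  have hs : Real.sin θ ^ 2 = 1 - Real.cos θ ^ 2 := Real.sin_sq θ
  linear_combination -key - (derivative (derivative (T ℝ n))).eval (Real.cos θ) * hs -
    (n : ℝ) ^ 2 * hθ


end ChebAux

theorem stmt_15 (n : ℕ) (hn : 2 ≤ n)
    (x : Fin n → ℝ)
    (hdef : ∀ i : Fin n, x i = Real.cos ((2 * ((i : ℕ) + 1 : ℝ) - 1) * π / (2 * n))) :
    Function.Injective x ∧
    ∀ i : Fin n, (1 - x i ^ 2) * ∑ k ∈ univ.erase i, 2 / (x i - x k) = x i := by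
  classical
  have hnR : (0 : ℝ) < n := by exact_mod_cast Nat.pos_of_ne_zero (by omega)
  set θf : Fin n → ℝ := fun i => (2 * ((i : ℕ) + 1 : ℝ) - 1) * π / (2 * n) with hθf
  have hx : ∀ i, x i = Real.cos (θf i) := by intro i; rw [hθf]; exact hdef i
  have hπ := Real.pi_pos
  have hθpos : ∀ i, 0 < θf i := by
    intro i
    have hi : (0 : ℝ) ≤ (i : ℕ) := by positivity
    rw [hθf]
    exact div_pos (mul_pos (by linarith) hπ) (by positivity)
  have hθlt : ∀ i, θf i < π := by
    intro i
    have hi : ((i : ℕ) : ℝ) + 1 ≤ n := by exact_mod_cast i.isLt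
    rw [hθf]
    rw [div_lt_iff₀ (by positivity)]
    nlinarith
  have hcosn : ∀ i, Real.cos ((n : ℝ) * θf i) = 0 := by
    intro i
    rw [Real.cos_eq_zero_iff]
    refine ⟨(i : ℕ), ?_⟩
    rw [hθf]
    have : ((n : ℝ)) ≠ 0 := ne_of_gt hnR
    push_cast
    field_simp
    ring
  have hinj : Function.Injective x := by
    intro i j hij
    rw [hx i, hx j] at hij
    have h := Real.injOn_cos ⟨le_of_lt (hθpos i), le_of_lt (hθlt i)⟩
      ⟨le_of_lt (hθpos j), le_of_lt (hθlt j)⟩ hij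
    rw [hθf] at h
    simp only at h
    have hiv : ((i : ℕ) : ℝ) = ((j : ℕ) : ℝ) := by
      field_simp at h
      linarith
    have : (i : ℕ) = (j : ℕ) := by exact_mod_cast hiv
    exact Fin.ext this
  refine ⟨hinj, ?_⟩
  -- the polynomial Q
  set Q : Polynomial ℝ := ∏ k : Fin n, (Polynomial.X - Polynomial.C (x k)) with hQeq
  have hQmonic : Q.Monic := Polynomial.monic_prod_of_monic _ _ fun k _ => Polynomial.monic_X_sub_C (x k)
  have hQdeg : Q.natDegree = n := by
    rw [hQeq, Polynomial.natDegree_prod _ _ fun k _ => Polynomial.X_sub_C_ne_zero (x k)]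
    simp
  have hQcoeffn : Q.coeff n = 1 := by
    have := hQmonic.coeff_natDegree
    rwa [hQdeg] at this
  set c : ℝ := 2 ^ (n - 1) with hc
  have hcne : c ≠ 0 := by positivity
  have hTcoeff : (Polynomial.Chebyshev.T ℝ (n : ℤ)).coeff n = c := by
    have := cheb_coeff (n - 1)
    rwa [show n - 1 + 1 = n from by omega] at this
  have hT : Polynomial.Chebyshev.T ℝ (n : ℤ) = Polynomial.C c * Q := by
    apply Polynomial.eq_of_degree_sub_lt_of_eval_index_eq (univ : Finset (Fin n)) hinj.injOn
    · rw [show #(univ : Finset (Fin n)) = n by simp]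
      rw [Polynomial.degree_lt_iff_coeff_zero]
      intro m hm
      rw [Polynomial.coeff_sub, Polynomial.coeff_C_mul]
      rcases eq_or_lt_of_le hm with rfl | h
      · rw [hTcoeff, hQcoeffn]; ring
      · rw [Polynomial.coeff_eq_zero_of_natDegree_lt (lt_of_le_of_lt (cheb_natDegree_le n) h),
          Polynomial.coeff_eq_zero_of_natDegree_lt (by rw [hQdeg]; exact h)]
        ring
    · intro i _
      have h1 : (Polynomial.Chebyshev.T ℝ (n : ℤ)).eval (x i) = 0 := by
        rw [hx i, Polynomial.Chebyshev.T_real_cos]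
        push_cast
        exact hcosn i
      have h2 : (Polynomial.C c * Q).eval (x i) = 0 := by
        rw [Polynomial.eval_mul, hQeq, Polynomial.eval_prod]
        rw [Finset.prod_eq_zero (mem_univ i) (by simp)]
        ring
      rw [h1, h2]
  -- derivative formulas
  have dprod : ∀ (s : Finset (Fin n)) (f : Fin n → Polynomial ℝ),
      Polynomial.derivative (∏ k ∈ s, f k)
      = ∑ k ∈ s, (∏ j ∈ s.erase k, f j) * Polynomial.derivative (f k) :=
    fun s f => Polynomial.derivative_prod
  have hQ' : Polynomial.derivative Q
      = ∑ b : Fin n, ∏ a ∈ univ.erase b, (Polynomial.X - Polynomial.C (x a)) := by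
    rw [hQeq, dprod]
    simp
  have hQ'eval : ∀ i, (Polynomial.derivative Q).eval (x i) = ∏ a ∈ univ.erase i, (x i - x a) := by
    intro i
    rw [hQ', Polynomial.eval_finset_sum]
    rw [Finset.sum_eq_single i ?_ (by simp)]
    · simp [Polynomial.eval_prod]
    · intro b _ hbi
      rw [Polynomial.eval_prod]
      exact Finset.prod_eq_zero (Finset.mem_erase.mpr ⟨Ne.symm hbi, mem_univ i⟩) (by simp)
  have hQ'' : Polynomial.derivative (Polynomial.derivative Q)
      = ∑ b : Fin n, ∑ k ∈ univ.erase b, ∏ a ∈ (univ.erase b).erase k,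
          (Polynomial.X - Polynomial.C (x a)) := by
    rw [hQ', Polynomial.derivative_sum]
    refine Finset.sum_congr rfl fun b _ => ?_
    rw [dprod]
    simp
  have hQ''eval : ∀ i, (Polynomial.derivative (Polynomial.derivative Q)).eval (x i)
      = 2 * ∑ k ∈ univ.erase i, ∏ a ∈ (univ.erase i).erase k, (x i - x a) := by
    intro i
    rw [hQ'', Polynomial.eval_finset_sum]
    rw [← Finset.add_sum_erase _ _ (mem_univ i)]
    have houter : (∑ k ∈ univ.erase i, ∏ a ∈ (univ.erase i).erase k,
        (Polynomial.X - Polynomial.C (x a))).eval (x i)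
        = ∑ k ∈ univ.erase i, ∏ a ∈ (univ.erase i).erase k, (x i - x a) := by
      rw [Polynomial.eval_finset_sum]
      exact Finset.sum_congr rfl fun k _ => by simp [Polynomial.eval_prod]
    have hrest : ∀ b ∈ univ.erase i,
        (∑ k ∈ univ.erase b, ∏ a ∈ (univ.erase b).erase k,
          (Polynomial.X - Polynomial.C (x a))).eval (x i)
        = ∏ a ∈ (univ.erase i).erase b, (x i - x a) := by
      intro b hb
      have hbi : b ≠ i := (Finset.mem_erase.mp hb).1
      have himem : i ∈ univ.erase b := Finset.mem_erase.mpr ⟨Ne.symm hbi, mem_univ i⟩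
      rw [Polynomial.eval_finset_sum, Finset.sum_eq_single i ?_ (fun h => absurd himem h)]
      · rw [Polynomial.eval_prod, Finset.erase_right_comm]
        exact Finset.prod_congr rfl fun a _ => by simp
      · intro k hk hki
        rw [Polynomial.eval_prod]
        exact Finset.prod_eq_zero
          (Finset.mem_erase.mpr ⟨Ne.symm hki, himem⟩) (by simp)
    rw [Finset.sum_congr rfl hrest, houter]
    ring
  -- ODE transferred to Q
  have hODEQ : ∀ i, (1 - x i ^ 2) * (Polynomial.derivative (Polynomial.derivative Q)).eval (x i)
      = x i * (Polynomial.derivative Q).eval (x i) := by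
    intro i
    have h := cheb_ode n (θf i) (hcosn i)
    rw [← hx i] at h
    rw [hT, Polynomial.derivative_C_mul, Polynomial.derivative_C_mul,
      Polynomial.eval_C_mul, Polynomial.eval_C_mul] at h
    apply mul_left_cancel₀ hcne
    linear_combination h
  -- conclusion
  intro i
  have hne : ∀ k ∈ univ.erase i, x i - x k ≠ 0 := fun k hk =>
    sub_ne_zero.mpr fun h => (Finset.mem_erase.mp hk).1 (hinj h.symm)
  have hPi : (∏ a ∈ univ.erase i, (x i - x a)) ≠ 0 := Finset.prod_ne_zero_iff.mpr hne
  have hkey : (∏ a ∈ univ.erase i, (x i - x a)) * ∑ k ∈ univ.erase i, 2 / (x i - x k)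
      = 2 * ∑ k ∈ univ.erase i, ∏ a ∈ (univ.erase i).erase k, (x i - x a) := by
    rw [Finset.mul_sum, Finset.mul_sum]
    refine Finset.sum_congr rfl fun k hk => ?_
    rw [← Finset.mul_prod_erase _ _ hk]
    field_simp [hne k hk]
  apply mul_left_cancel₀ hPi
  rw [show (∏ a ∈ univ.erase i, (x i - x a)) * ((1 - x i ^ 2) * ∑ k ∈ univ.erase i, 2 / (x i - x k))
      = (1 - x i ^ 2) * ((∏ a ∈ univ.erase i, (x i - x a)) * ∑ k ∈ univ.erase i, 2 / (x i - x k)) from by ring,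
    hkey, ← hQ''eval i, hODEQ i, hQ'eval i]
  ring
end

section
/- Let p, q be real polynomials with deg p ≤ 2 and deg q ≤ 1, let x_1, …, x_n be pairwise distinct real numbers, f(x) = ∏_{k=1}^n (x − x_k), and fix i. Suppose u : (−ε, ε) × ℝ → ℝ is a function, smooth in both variables, satisfying u(0, x) = f(x) for all x and the parabolic equation ∂_t u(t,x) = ∂_x( p(x)·∂_x u(t,x) ) − q(x)·∂_x u(t,x) for all (t,x), and suppose ξ : (−ε, ε) → ℝ is differentiable with ξ(0) = x_i and u(t, ξ(t)) = 0 for all t. Then ξ'(0) = −( p(x_i)·∑_{k≠i} 2/(x_i − x_k) + p'(x_i) − q(x_i) ). -/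
open Polynomial Finset

theorem stmt_17 (p q : Polynomial ℝ) (hp : p.natDegree ≤ 2) (hq : q.natDegree ≤ 1)
    (n : ℕ) (hn : 1 ≤ n) (x : Fin n → ℝ) (hx : Function.Injective x) (i : Fin n)
    (ε : ℝ) (hε : 0 < ε)
    (u : ℝ → ℝ → ℝ)
    (hsmooth : ContDiffOn ℝ (⊤ : ℕ∞) (fun pr : ℝ × ℝ => u pr.1 pr.2)
        (Set.Ioo (-ε) ε ×ˢ Set.univ))
    (hinit : ∀ y : ℝ, u 0 y = (∏ k, (X - C (x k))).eval y)
    (hpde : ∀ t ∈ Set.Ioo (-ε) ε, ∀ y : ℝ,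
      deriv (fun s => u s y) t
        = deriv (fun z => p.eval z * deriv (u t) z) y - q.eval y * deriv (u t) y)
    (ξ : ℝ → ℝ)
    (hξdiff : ∀ t ∈ Set.Ioo (-ε) ε, DifferentiableAt ℝ ξ t)
    (hξ0 : ξ 0 = x i)
    (hξzero : ∀ t ∈ Set.Ioo (-ε) ε, u t (ξ t) = 0) :
    deriv ξ 0 = -(p.eval (x i) * ∑ k ∈ univ.erase i, 2 / (x i - x k)
        + p.derivative.eval (x i) - q.eval (x i)) := by
  classical
  set f : Polynomial ℝ := ∏ k, (X - C (x k)) with hf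
  set g : Polynomial ℝ := ∏ k ∈ univ.erase i, (X - C (x k)) with hg
  set A : ℝ := g.eval (x i) with hA
  set S : ℝ := ∑ k ∈ univ.erase i, 2 / (x i - x k) with hS
  -- algebraic facts
  have hsub : ∀ k ∈ univ.erase i, x i - x k ≠ 0 := by
    intro k hk
    have : k ≠ i := (mem_erase.mp hk).1
    exact sub_ne_zero.mpr fun h => this (hx h.symm)
  have hAval : A = ∏ k ∈ univ.erase i, (x i - x k) := by
    simp [hA, hg, eval_prod]
  have hAne : A ≠ 0 := by
    rw [hAval]
    exact prod_ne_zero_iff.mpr hsub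
  have hfg : f = (X - C (x i)) * g := (Finset.mul_prod_erase univ _ (mem_univ i)).symm
  have hgderiv : g.derivative.eval (x i) = A * ∑ k ∈ univ.erase i, (x i - x k)⁻¹ := by
    have : g = Lagrange.nodal (univ.erase i) x := rfl
    rw [this, Lagrange.derivative_nodal, eval_finset_sum, Finset.mul_sum]
    refine Finset.sum_congr rfl fun k hk => ?_
    rw [Lagrange.eval_nodal]
    have h1 : A = (x i - x k) * ∏ j ∈ (univ.erase i).erase k, (x i - x j) := by
      rw [hAval]
      exact (Finset.mul_prod_erase _ _ hk).symm
    rw [h1]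
    field_simp [hsub k hk]
  have hf'val : f.derivative.eval (x i) = A := by
    rw [hfg, derivative_mul, derivative_X_sub_C, one_mul]
    simp [hA]
  have hf''val : f.derivative.derivative.eval (x i) = A * S := by
    rw [hfg, derivative_mul, derivative_X_sub_C, one_mul, derivative_add, derivative_mul,
      derivative_X_sub_C, one_mul]
    simp only [eval_add, eval_mul, eval_sub, eval_X, eval_C, sub_self, zero_mul, add_zero]
    rw [hgderiv, hS, Finset.mul_sum, Finset.mul_sum]
    rw [← two_mul, Finset.mul_sum]
    refine Finset.sum_congr rfl fun k hk => ?_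
    field_simp
  -- analytic part
  have h0mem : (0 : ℝ) ∈ Set.Ioo (-ε) ε := by constructor <;> simp [hε] <;> linarith
  have hopen : IsOpen (Set.Ioo (-ε) ε ×ˢ (Set.univ : Set ℝ)) :=
    isOpen_Ioo.prod isOpen_univ
  have hmem : ((0 : ℝ), x i) ∈ Set.Ioo (-ε) ε ×ˢ (Set.univ : Set ℝ) := by
    exact ⟨h0mem, trivial⟩
  have hdiffU : DifferentiableAt ℝ (fun pr : ℝ × ℝ => u pr.1 pr.2) (0, x i) := by
    have := (hsmooth.contDiffAt (hopen.mem_nhds hmem)).differentiableAt (by simp)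
    exact this
  set F' := fderiv ℝ (fun pr : ℝ × ℝ => u pr.1 pr.2) (0, x i) with hF'
  have hFd : HasFDerivAt (fun pr : ℝ × ℝ => u pr.1 pr.2) F' (0, x i) :=
    hdiffU.hasFDerivAt
  -- partial derivatives
  have hcurve1 : HasDerivAt (fun s : ℝ => ((s, x i) : ℝ × ℝ)) (1, 0) 0 :=
    (hasDerivAt_id (0:ℝ)).prodMk (hasDerivAt_const 0 (x i))
  have hut : HasDerivAt (fun s => u s (x i)) (F' (1, 0)) 0 :=
    by have := hFd.comp_hasDerivAt 0 hcurve1; exact this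
  have hcurve2 : HasDerivAt (fun z : ℝ => ((0, z) : ℝ × ℝ)) (0, 1) (x i) :=
    (hasDerivAt_const (x i) (0:ℝ)).prodMk (hasDerivAt_id (x i))
  have hux : HasDerivAt (fun z => u 0 z) (F' (0, 1)) (x i) :=
    hFd.comp_hasDerivAt (x i) hcurve2
  have hξdiff0 := hξdiff 0 h0mem
  have hcurve3 : HasDerivAt (fun t : ℝ => ((t, ξ t) : ℝ × ℝ)) (1, deriv ξ 0) 0 :=
    (hasDerivAt_id (0:ℝ)).prodMk hξdiff0.hasDerivAt
  have hFd' : HasFDerivAt (fun pr : ℝ × ℝ => u pr.1 pr.2) F' (0, ξ 0) := by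
    rw [hξ0]; exact hFd
  have hcomp : HasDerivAt (fun t => u t (ξ t)) (F' (1, deriv ξ 0)) 0 :=
    by have := hFd'.comp_hasDerivAt 0 hcurve3; exact this
  -- the composed function vanishes near 0
  have hzero : deriv (fun t => u t (ξ t)) 0 = 0 := by
    have hev : (fun t => u t (ξ t)) =ᶠ[nhds (0:ℝ)] (fun _ => (0:ℝ)) := by
      filter_upwards [isOpen_Ioo.mem_nhds h0mem] with t ht using hξzero t ht
    rw [hev.deriv_eq, deriv_const]
  have hlin : F' (1, deriv ξ 0) = F' (1, 0) + deriv ξ 0 * F' (0, 1) := by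
    have : ((1, deriv ξ 0) : ℝ × ℝ) = (1, 0) + deriv ξ 0 • (0, 1) := by
      simp [Prod.ext_iff]
    rw [this, map_add, map_smul, smul_eq_mul]
  have hkey : F' (1, 0) + deriv ξ 0 * F' (0, 1) = 0 := by
    rw [← hlin, ← hcomp.deriv, hzero]
  -- identify partial derivatives via the PDE and initial condition
  have hu0 : u 0 = fun y => f.eval y := funext hinit
  have hux' : F' (0, 1) = A := by
    rw [← hux.deriv]
    have : (fun z => u 0 z) = fun z => f.eval z := hu0
    rw [this, Polynomial.deriv, hf'val]
  have hduz : deriv (u 0) = fun z => f.derivative.eval z := by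
    funext z
    rw [hu0]
    exact Polynomial.deriv f
  have hut' : F' (1, 0) = A * (p.derivative.eval (x i) - q.eval (x i)) + p.eval (x i) * (A * S) := by
    rw [← hut.deriv, hpde 0 h0mem (x i)]
    simp only [hduz]
    have h1 : (fun z => p.eval z * f.derivative.eval z)
        = fun z => (p * f.derivative).eval z := by
      funext z; simp
    rw [h1, Polynomial.deriv, derivative_mul, eval_add, eval_mul, eval_mul, hf'val, hf''val]
    ring
  -- conclude
  have : deriv ξ 0 * A = -(A * (p.eval (x i) * S + p.derivative.eval (x i) - q.eval (x i))) := by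
    have := hkey
    rw [hut', hux'] at this
    linarith [this]
  refine mul_right_cancel₀ hAne ?_
  rw [this]; ring
end
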